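/- Let A ∈ ℝ^{n×n} and let M, N ∈ ℝ^{n×n} be symmetric positive semidefinite with ker(M) ⊆ ker(Aᵀ) and ker(N) ⊆ ker(A). Then ‖M^{†/2} A N^{†/2}‖₂ = max over nonzero x, y of (xᵀAy)/sqrt((xᵀMx)(yᵀNy)) = 2 · max over nonzero x, y of (xᵀAy)/(xᵀMx + yᵀNy), with the convention 0/0 = 0. -/

import Mathlib

open Matrix

/-- The spectral (ℓ₂ operator) norm of a real matrix. -/
noncomputable def sNorm {m n : ℕ} (M : Matrix (Fin m) (Fin n) ℝ) : ℝ :=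
  ‖LinearMap.toContinuousLinearMap (Matrix.toEuclideanLin M)‖

/-- The canonical PSD square root, as `Matrix.PosSemidef.sqrt` was defined in Mathlib (Dec 2024);
    it has since been removed from Mathlib. -/
noncomputable def Matrix.PosSemidef.sqrt {n : ℕ} {A : Matrix (Fin n) (Fin n) ℝ} (hA : A.PosSemidef) :
    Matrix (Fin n) (Fin n) ℝ :=
  hA.1.eigenvectorUnitary.1 * diagonal ((↑) ∘ (√·) ∘ hA.1.eigenvalues) *
    (star hA.1.eigenvectorUnitary : Matrix (Fin n) (Fin n) ℝ)

/-- `Ap` satisfies the four Moore–Penrose equations for `A`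
    (these uniquely characterize the pseudoinverse). -/
def IsMoorePenrose {n : ℕ} (A Ap : Matrix (Fin n) (Fin n) ℝ) : Prop :=
  A * Ap * A = A ∧ Ap * A * Ap = Ap ∧ (A * Ap)ᵀ = A * Ap ∧ (Ap * A)ᵀ = Ap * A

lemma sqrt_symm' {n : ℕ} {M : Matrix (Fin n) (Fin n) ℝ} (hM : M.PosSemidef) :
    (Matrix.PosSemidef.sqrt hM)ᵀ = Matrix.PosSemidef.sqrt hM := by
  rw [Matrix.PosSemidef.sqrt, Matrix.transpose_mul, Matrix.transpose_mul, Matrix.diagonal_transpose,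
    Matrix.mul_assoc]
  simp [Matrix.star_eq_conjTranspose]

lemma sqrt_mul_self' {n : ℕ} {M : Matrix (Fin n) (Fin n) ℝ} (hM : M.PosSemidef) :
    Matrix.PosSemidef.sqrt hM * Matrix.PosSemidef.sqrt hM = M := by
  conv_rhs => rw [hM.1.spectral_theorem, Unitary.conjStarAlgAut_apply]
  rw [Matrix.PosSemidef.sqrt]
  have hu : (star hM.1.eigenvectorUnitary : Matrix (Fin n) (Fin n) ℝ) * hM.1.eigenvectorUnitary.1 = 1 :=
    Unitary.coe_star_mul_self _
  calc _ = hM.1.eigenvectorUnitary.1 * diagonal ((↑) ∘ (√·) ∘ hM.1.eigenvalues) *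
      ((star hM.1.eigenvectorUnitary : Matrix (Fin n) (Fin n) ℝ) * hM.1.eigenvectorUnitary.1) *
      diagonal ((↑) ∘ (√·) ∘ hM.1.eigenvalues) *
      (star hM.1.eigenvectorUnitary : Matrix (Fin n) (Fin n) ℝ) := by noncomm_ring
    _ = _ := by
      rw [hu, Matrix.mul_one, Matrix.mul_assoc _ (diagonal _) (diagonal _), diagonal_mul_diagonal]
      congr 3
      funext i
      simp [Real.mul_self_sqrt (hM.eigenvalues_nonneg i)]

lemma mp_unique {n : ℕ} {A B C : Matrix (Fin n) (Fin n) ℝ}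
    (hB : IsMoorePenrose A B) (hC : IsMoorePenrose A C) : B = C := by
  obtain ⟨hB1, hB2, hB3, hB4⟩ := hB
  obtain ⟨hC1, hC2, hC3, hC4⟩ := hC
  have hAB : A * B = A * C := by
    calc A * B = (A * C) * (A * B) := by rw [← Matrix.mul_assoc, hC1]
    _ = (A * C)ᵀ * (A * B)ᵀ := by rw [hC3, hB3]
    _ = Cᵀ * ((A * B * A)ᵀ) := by
        simp only [Matrix.transpose_mul, Matrix.mul_assoc]
    _ = Cᵀ * Aᵀ := by rw [hB1]
    _ = (A * C)ᵀ := by rw [Matrix.transpose_mul]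
    _ = A * C := hC3
  have hBA : B * A = C * A := by
    calc B * A = (B * A) * (C * A) := by rw [Matrix.mul_assoc, ← Matrix.mul_assoc A C A, hC1]
    _ = (B * A)ᵀ * (C * A)ᵀ := by rw [hB4, hC4]
    _ = ((A * B * A)ᵀ) * Cᵀ := by
        simp only [Matrix.transpose_mul, Matrix.mul_assoc]
    _ = Aᵀ * Cᵀ := by rw [hB1]
    _ = (C * A)ᵀ := by rw [Matrix.transpose_mul]
    _ = C * A := hC4
  calc B = B * A * B := hB2.symm
  _ = B * (A * C) := by rw [Matrix.mul_assoc, hAB]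
  _ = (C * A) * C := by rw [← Matrix.mul_assoc, hBA]
  _ = C := hC2

lemma mp_transpose {n : ℕ} {A B : Matrix (Fin n) (Fin n) ℝ}
    (hB : IsMoorePenrose A B) : IsMoorePenrose Aᵀ Bᵀ := by
  obtain ⟨h1, h2, h3, h4⟩ := hB
  refine ⟨?_, ?_, ?_, ?_⟩
  · rw [← Matrix.transpose_mul, ← Matrix.transpose_mul, ← Matrix.mul_assoc, h1]
  · rw [← Matrix.transpose_mul, ← Matrix.transpose_mul, ← Matrix.mul_assoc, h2]
  · simp only [← Matrix.transpose_mul, Matrix.transpose_transpose, h4]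
  · simp only [← Matrix.transpose_mul, Matrix.transpose_transpose, h3]

lemma mp_symm {n : ℕ} {A B : Matrix (Fin n) (Fin n) ℝ}
    (hA : Aᵀ = A) (hB : IsMoorePenrose A B) : Bᵀ = B := by
  have := mp_transpose hB
  rw [hA] at this
  exact mp_unique this hB

noncomputable def ev {n : ℕ} (v : Fin n → ℝ) : EuclideanSpace ℝ (Fin n) :=
  (WithLp.equiv 2 _).symm v

lemma ev_inner {n : ℕ} (u v : Fin n → ℝ) : (inner ℝ (ev u) (ev v) : ℝ) = u ⬝ᵥ v := by
  simp [ev, PiLp.inner_apply, dotProduct, RCLike.inner_apply, mul_comm]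

lemma dot_self_nonneg {n : ℕ} (v : Fin n → ℝ) : 0 ≤ v ⬝ᵥ v := by
  rw [← ev_inner]; exact real_inner_self_nonneg

lemma ev_norm {n : ℕ} (v : Fin n → ℝ) : ‖ev v‖ = Real.sqrt (v ⬝ᵥ v) := by
  rw [← ev_inner, real_inner_self_eq_norm_sq, Real.sqrt_sq (norm_nonneg _)]

lemma dot_cs {n : ℕ} (u v : Fin n → ℝ) :
    u ⬝ᵥ v ≤ Real.sqrt (u ⬝ᵥ u) * Real.sqrt (v ⬝ᵥ v) := by
  rw [← ev_inner, ← ev_norm, ← ev_norm]; exact real_inner_le_norm _ _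

lemma dot_shift {n : ℕ} {S : Matrix (Fin n) (Fin n) ℝ} (hS : Sᵀ = S)
    (C : Matrix (Fin n) (Fin n) ℝ) (x y : Fin n → ℝ) :
    x ⬝ᵥ ((S * C) *ᵥ y) = (S *ᵥ x) ⬝ᵥ (C *ᵥ y) := by
  rw [← Matrix.mulVec_mulVec, Matrix.dotProduct_mulVec x S (C *ᵥ y), ← Matrix.mulVec_transpose, hS]

lemma ev_mulVec {n : ℕ} (B : Matrix (Fin n) (Fin n) ℝ) (v : Fin n → ℝ) :
    (LinearMap.toContinuousLinearMap (Matrix.toEuclideanLin B)) (ev v) = ev (B *ᵥ v) := by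
  simp [ev, LinearMap.coe_toContinuousLinearMap', toLpLin_toLp]

lemma sNorm_nonneg {n : ℕ} (B : Matrix (Fin n) (Fin n) ℝ) : 0 ≤ sNorm B := norm_nonneg _

lemma sNorm_mulVec_le {n : ℕ} (B : Matrix (Fin n) (Fin n) ℝ) (v : Fin n → ℝ) :
    Real.sqrt ((B *ᵥ v) ⬝ᵥ (B *ᵥ v)) ≤ sNorm B * Real.sqrt (v ⬝ᵥ v) := by
  rw [← ev_norm, ← ev_norm, ← ev_mulVec]
  exact ContinuousLinearMap.le_opNorm _ _

lemma sNorm_le_bound {n : ℕ} (B : Matrix (Fin n) (Fin n) ℝ) (c : ℝ) (hc : 0 ≤ c)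
    (h : ∀ v : Fin n → ℝ, Real.sqrt ((B *ᵥ v) ⬝ᵥ (B *ᵥ v)) ≤ c * Real.sqrt (v ⬝ᵥ v)) :
    sNorm B ≤ c := by
  apply ContinuousLinearMap.opNorm_le_bound _ hc
  intro w
  have : w = ev ((WithLp.equiv 2 _) w) := rfl
  rw [this, ev_mulVec, ev_norm, ev_norm]
  exact h _


lemma eq_zero_of_mulVec {n : ℕ} {X : Matrix (Fin n) (Fin n) ℝ}
    (h : ∀ v : Fin n → ℝ, X *ᵥ v = 0) : X = 0 := by
  ext i j
  have := congrFun (h (Pi.single j 1)) i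
  simpa using this

set_option maxHeartbeats 1000000 in
/-- For PSD M, N with ker M ⊆ ker Aᵀ and ker N ⊆ ker A:
    ‖M^{†/2} A N^{†/2}‖₂ equals the maximum of xᵀAy / √((xᵀMx)(yᵀNy)) over nonzero x, y
    and twice the maximum of xᵀAy / (xᵀMx + yᵀNy) over nonzero x, y
    (with the convention 0/0 = 0, which is Lean's division convention).
    Here M^{†/2}, N^{†/2} are expressed as the Moore–Penrose pseudoinverses
    Mp, Np of the canonical PSD square roots of M and N. -/
theorem stmt13 {n : ℕ} (A M N : Matrix (Fin n) (Fin n) ℝ)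
    (hM : M.PosSemidef) (hN : N.PosSemidef)
    (hkerM : ∀ v : Fin n → ℝ, M *ᵥ v = 0 → Aᵀ *ᵥ v = 0)
    (hkerN : ∀ v : Fin n → ℝ, N *ᵥ v = 0 → A *ᵥ v = 0)
    (Mp Np : Matrix (Fin n) (Fin n) ℝ)
    (hMp : IsMoorePenrose (Matrix.PosSemidef.sqrt hM) Mp) (hNp : IsMoorePenrose (Matrix.PosSemidef.sqrt hN) Np) :
    sNorm (Mp * A * Np) =
      sSup {r : ℝ | ∃ x y : Fin n → ℝ, x ≠ 0 ∧ y ≠ 0 ∧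
        r = (x ⬝ᵥ (A *ᵥ y)) / Real.sqrt ((x ⬝ᵥ (M *ᵥ x)) * (y ⬝ᵥ (N *ᵥ y)))} ∧
    sNorm (Mp * A * Np) =
      2 * sSup {r : ℝ | ∃ x y : Fin n → ℝ, x ≠ 0 ∧ y ≠ 0 ∧
        r = (x ⬝ᵥ (A *ᵥ y)) / ((x ⬝ᵥ (M *ᵥ x)) + (y ⬝ᵥ (N *ᵥ y)))} := by
  set S : Matrix (Fin n) (Fin n) ℝ := Matrix.PosSemidef.sqrt hM with hSdef
  set S' : Matrix (Fin n) (Fin n) ℝ := Matrix.PosSemidef.sqrt hN with hS'def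
  have hSsym : Sᵀ = S := by
    exact sqrt_symm' hM
  have hS'sym : S'ᵀ = S' := by
    exact sqrt_symm' hN
  have hMpsym : Mpᵀ = Mp := mp_symm hSsym hMp
  have hNpsym : Npᵀ = Np := mp_symm hS'sym hNp
  obtain ⟨hM1, hM2, hM3, hM4⟩ := hMp
  obtain ⟨hN1, hN2, hN3, hN4⟩ := hNp
  have hMS : M = S * S := (sqrt_mul_self' hM).symm
  have hNS : N = S' * S' := (sqrt_mul_self' hN).symm
  set B : Matrix (Fin n) (Fin n) ℝ := Mp * A * Np with hBdef
  set P : Matrix (Fin n) (Fin n) ℝ := S * Mp with hPdef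
  set Q : Matrix (Fin n) (Fin n) ℝ := S' * Np with hQdef
  have hPsym : Pᵀ = P := hM3
  have hQsym : Qᵀ = Q := hN3
  have hcommM : Mp * S = P := by rw [← hM3, Matrix.transpose_mul, hMpsym, hSsym]
  have hcommN : Np * S' = Q := by rw [← hN3, Matrix.transpose_mul, hNpsym, hS'sym]
  have hSP : S * P = S := by rw [← hcommM, ← Matrix.mul_assoc]; exact hM1
  have hS'Q : S' * Q = S' := by rw [← hcommN, ← Matrix.mul_assoc]; exact hN1
  have hMP : M * P = M := by rw [hMS, Matrix.mul_assoc, hSP]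
  have hNQ : N * Q = N := by rw [hNS, Matrix.mul_assoc, hS'Q]
  have hPMp : P * Mp = Mp := by rw [← hcommM]; exact hM2
  have hNpQ : Np * Q = Np := by rw [hQdef, ← Matrix.mul_assoc]; exact hN2
  -- P * A = A
  have hPA : P * A = A := by
    have h0 : Aᵀ * (1 - P) = 0 := by
      apply eq_zero_of_mulVec
      intro v
      rw [← Matrix.mulVec_mulVec]
      apply hkerM
      rw [Matrix.mulVec_mulVec, Matrix.mul_sub, Matrix.mul_one, hMP, sub_self,
        Matrix.zero_mulVec]
    have h1 : Aᵀ * P = Aᵀ := by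
      have h2 : Aᵀ * 1 - Aᵀ * P = 0 := by rw [← Matrix.mul_sub]; exact h0
      have h3 := sub_eq_zero.mp h2
      rw [Matrix.mul_one] at h3
      exact h3.symm
    calc P * A = Pᵀ * (Aᵀ)ᵀ := by rw [hPsym, Matrix.transpose_transpose]
    _ = (Aᵀ * P)ᵀ := (Matrix.transpose_mul _ _).symm
    _ = A := by rw [h1, Matrix.transpose_transpose]
  -- A * Q = A
  have hAQ : A * Q = A := by
    have h0 : A * (1 - Q) = 0 := by
      apply eq_zero_of_mulVec
      intro v
      rw [← Matrix.mulVec_mulVec]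
      apply hkerN
      rw [Matrix.mulVec_mulVec, Matrix.mul_sub, Matrix.mul_one, hNQ, sub_self,
        Matrix.zero_mulVec]
    have h2 : A * 1 - A * Q = 0 := by rw [← Matrix.mul_sub]; exact h0
    have h3 := sub_eq_zero.mp h2
    rw [Matrix.mul_one] at h3
    exact h3.symm
  -- A = S * B * S'
  have hASBS : S * B * S' = A := by
    calc S * B * S' = (S * Mp) * A * (Np * S') := by rw [hBdef]; noncomm_ring
    _ = P * A * Q := by rw [← hPdef, hcommN]
    _ = A := by rw [hPA, hAQ]
  -- P * B = B, B * Q = B, Q * Q = Q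
  have hPB : P * B = B := by
    rw [hBdef, ← Matrix.mul_assoc, ← Matrix.mul_assoc, hPMp]
  have hBQ : B * Q = B := by
    rw [hBdef, Matrix.mul_assoc, hNpQ]
  have hQQ : Q * Q = Q := by
    calc Q * Q = S' * (Np * Q) := by rw [hQdef, Matrix.mul_assoc]
    _ = S' * Np := by rw [hNpQ]
    _ = Q := hQdef.symm
  -- case n = 0
  rcases Nat.eq_zero_or_pos n with hn | hn
  · subst hn
    have hempty : ∀ (x : Fin 0 → ℝ), x = 0 := fun x => funext fun i => i.elim0
    have hB0 : sNorm B = 0 := by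
      refine le_antisymm (sNorm_le_bound B 0 le_rfl fun v => ?_) (sNorm_nonneg B)
      rw [hempty (B *ᵥ v), hempty v]
      simp
    have hs1 : {r : ℝ | ∃ x y : Fin 0 → ℝ, x ≠ 0 ∧ y ≠ 0 ∧
        r = (x ⬝ᵥ (A *ᵥ y)) / Real.sqrt ((x ⬝ᵥ (M *ᵥ x)) * (y ⬝ᵥ (N *ᵥ y)))} = ∅ := by
      ext r; simp only [Set.mem_setOf_eq, Set.mem_empty_iff_false, iff_false]
      rintro ⟨x, y, hx, -, -⟩; exact hx (hempty x)
    have hs2 : {r : ℝ | ∃ x y : Fin 0 → ℝ, x ≠ 0 ∧ y ≠ 0 ∧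
        r = (x ⬝ᵥ (A *ᵥ y)) / ((x ⬝ᵥ (M *ᵥ x)) + (y ⬝ᵥ (N *ᵥ y)))} = ∅ := by
      ext r; simp only [Set.mem_setOf_eq, Set.mem_empty_iff_false, iff_false]
      rintro ⟨x, y, hx, -, -⟩; exact hx (hempty x)
    rw [hB0, hs1, hs2, Real.sSup_empty]
    norm_num
  -- main case
  set c := sNorm B with hcdef
  have hc0 : 0 ≤ c := sNorm_nonneg B
  set T1 : Set ℝ := {r : ℝ | ∃ x y : Fin n → ℝ, x ≠ 0 ∧ y ≠ 0 ∧
      r = (x ⬝ᵥ (A *ᵥ y)) / Real.sqrt ((x ⬝ᵥ (M *ᵥ x)) * (y ⬝ᵥ (N *ᵥ y)))} with hT1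
  set T2 : Set ℝ := {r : ℝ | ∃ x y : Fin n → ℝ, x ≠ 0 ∧ y ≠ 0 ∧
      r = (x ⬝ᵥ (A *ᵥ y)) / ((x ⬝ᵥ (M *ᵥ x)) + (y ⬝ᵥ (N *ᵥ y)))} with hT2
  have hnum : ∀ x y : Fin n → ℝ, x ⬝ᵥ (A *ᵥ y) = (S *ᵥ x) ⬝ᵥ (B *ᵥ (S' *ᵥ y)) := by
    intro x y
    conv_lhs => rw [← hASBS]
    rw [Matrix.mul_assoc, dot_shift hSsym, ← Matrix.mulVec_mulVec]
  have hdenM : ∀ x : Fin n → ℝ, x ⬝ᵥ (M *ᵥ x) = (S *ᵥ x) ⬝ᵥ (S *ᵥ x) := by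
    intro x; rw [hMS, dot_shift hSsym]
  have hdenN : ∀ y : Fin n → ℝ, y ⬝ᵥ (N *ᵥ y) = (S' *ᵥ y) ⬝ᵥ (S' *ᵥ y) := by
    intro y; rw [hNS, dot_shift hS'sym]
  have cbound : ∀ u w : Fin n → ℝ,
      u ⬝ᵥ (B *ᵥ w) ≤ c * (Real.sqrt (u ⬝ᵥ u) * Real.sqrt (w ⬝ᵥ w)) := by
    intro u w
    calc u ⬝ᵥ (B *ᵥ w)
        ≤ Real.sqrt (u ⬝ᵥ u) * Real.sqrt ((B *ᵥ w) ⬝ᵥ (B *ᵥ w)) := dot_cs _ _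
    _ ≤ Real.sqrt (u ⬝ᵥ u) * (c * Real.sqrt (w ⬝ᵥ w)) :=
        mul_le_mul_of_nonneg_left (sNorm_mulVec_le B w) (Real.sqrt_nonneg _)
    _ = c * (Real.sqrt (u ⬝ᵥ u) * Real.sqrt (w ⬝ᵥ w)) := by ring
  -- upper bounds
  have ub1 : ∀ r ∈ T1, r ≤ c := by
    rintro r ⟨x, y, -, -, rfl⟩
    rw [hnum, hdenM, hdenN, Real.sqrt_mul (dot_self_nonneg (S *ᵥ x))]
    by_cases hd : Real.sqrt ((S *ᵥ x) ⬝ᵥ (S *ᵥ x)) * Real.sqrt ((S' *ᵥ y) ⬝ᵥ (S' *ᵥ y)) = 0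
    · rw [hd, div_zero]; exact hc0
    · have hd' : 0 < Real.sqrt ((S *ᵥ x) ⬝ᵥ (S *ᵥ x)) * Real.sqrt ((S' *ᵥ y) ⬝ᵥ (S' *ᵥ y)) :=
        lt_of_le_of_ne (by positivity) (Ne.symm hd)
      rw [div_le_iff₀ hd']
      exact cbound _ _
  have ub2 : ∀ r ∈ T2, r ≤ c / 2 := by
    rintro r ⟨x, y, -, -, rfl⟩
    rw [hnum, hdenM, hdenN]
    set u := S *ᵥ x
    set w := S' *ᵥ y
    by_cases hd : u ⬝ᵥ u + w ⬝ᵥ w = 0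
    · have huu : u ⬝ᵥ u = 0 := by
        have := dot_self_nonneg u; have := dot_self_nonneg w; linarith
      have hu0 : u = 0 := dotProduct_self_eq_zero.mp huu
      rw [hu0, zero_dotProduct, zero_div]
      linarith
    · have hd' : 0 < u ⬝ᵥ u + w ⬝ᵥ w := by
        have := dot_self_nonneg u; have := dot_self_nonneg w
        rcases lt_or_eq_of_le (add_nonneg ‹0 ≤ u ⬝ᵥ u› ‹0 ≤ w ⬝ᵥ w›) with h | h
        · exact h
        · exact absurd h.symm hd
      rw [div_le_iff₀ hd']
      have h2 : 2 * (Real.sqrt (u ⬝ᵥ u) * Real.sqrt (w ⬝ᵥ w)) ≤ u ⬝ᵥ u + w ⬝ᵥ w := by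
        nlinarith [Real.sq_sqrt (dot_self_nonneg u), Real.sq_sqrt (dot_self_nonneg w),
          sq_nonneg (Real.sqrt (u ⬝ᵥ u) - Real.sqrt (w ⬝ᵥ w))]
      calc u ⬝ᵥ (B *ᵥ w) ≤ c * (Real.sqrt (u ⬝ᵥ u) * Real.sqrt (w ⬝ᵥ w)) := cbound u w
      _ = c / 2 * (2 * (Real.sqrt (u ⬝ᵥ u) * Real.sqrt (w ⬝ᵥ w))) := by ring
      _ ≤ c / 2 * (u ⬝ᵥ u + w ⬝ᵥ w) := by
          apply mul_le_mul_of_nonneg_left h2 (by linarith)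
  -- nonemptiness and symmetry
  have hone : (fun _ : Fin n => (1:ℝ)) ≠ 0 := by
    intro h
    have := congrFun h ⟨0, hn⟩
    norm_num at this
  have hT1ne : T1.Nonempty := ⟨_, ⟨_, _, hone, hone, rfl⟩⟩
  have hT2ne : T2.Nonempty := ⟨_, ⟨_, _, hone, hone, rfl⟩⟩
  have hbdd1 : BddAbove T1 := ⟨c, fun r hr => ub1 r hr⟩
  have hbdd2 : BddAbove T2 := ⟨c / 2, fun r hr => ub2 r hr⟩
  have hsymm : ∀ (x y : Fin n → ℝ), ((-x) ⬝ᵥ (A *ᵥ y) = -(x ⬝ᵥ (A *ᵥ y)))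
      ∧ ((-x) ⬝ᵥ (M *ᵥ (-x)) = x ⬝ᵥ (M *ᵥ x)) := by
    intro x y
    constructor
    · rw [neg_dotProduct]
    · rw [neg_dotProduct, Matrix.mulVec_neg, dotProduct_neg, neg_neg]
  have hsup1nn : 0 ≤ sSup T1 := by
    obtain ⟨r, x, y, hx, hy, hr⟩ := hT1ne
    have h1 := le_csSup hbdd1 (show r ∈ T1 from ⟨x, y, hx, hy, hr⟩)
    have h2 : -r ∈ T1 := by
      refine ⟨-x, y, neg_ne_zero.mpr hx, hy, ?_⟩
      rw [(hsymm x y).1, (hsymm x y).2, hr, neg_div]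
    have h3 := le_csSup hbdd1 h2
    linarith
  have hsup2nn : 0 ≤ sSup T2 := by
    obtain ⟨r, x, y, hx, hy, hr⟩ := hT2ne
    have h1 := le_csSup hbdd2 (show r ∈ T2 from ⟨x, y, hx, hy, hr⟩)
    have h2 : -r ∈ T2 := by
      refine ⟨-x, y, neg_ne_zero.mpr hx, hy, ?_⟩
      rw [(hsymm x y).1, (hsymm x y).2, hr, neg_div]
    have h3 := le_csSup hbdd2 h2
    linarith
  -- key construction for lower bounds
  have key : ∀ v : Fin n → ℝ, B *ᵥ v ≠ 0 →
      ∃ u w : Fin n → ℝ, u = B *ᵥ v ∧ u ≠ 0 ∧ w ≠ 0 ∧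
        S *ᵥ (Mp *ᵥ u) = u ∧ S' *ᵥ (Np *ᵥ v) = w ∧ B *ᵥ w = u ∧
        Mp *ᵥ u ≠ 0 ∧ Np *ᵥ v ≠ 0 ∧
        Real.sqrt (w ⬝ᵥ w) ≤ Real.sqrt (v ⬝ᵥ v) := by
    intro v hv
    have e3 : S *ᵥ (Mp *ᵥ (B *ᵥ v)) = B *ᵥ v := by
      rw [Matrix.mulVec_mulVec, ← hPdef, Matrix.mulVec_mulVec, hPB]
    have e4 : S' *ᵥ (Np *ᵥ v) = Q *ᵥ v := by
      rw [Matrix.mulVec_mulVec, ← hQdef]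
    have e5 : B *ᵥ (Q *ᵥ v) = B *ᵥ v := by
      rw [Matrix.mulVec_mulVec, hBQ]
    have e1 : Q *ᵥ v ≠ 0 := by
      intro h0
      apply hv
      rw [← e5, h0, Matrix.mulVec_zero]
    have e2 : Mp *ᵥ (B *ᵥ v) ≠ 0 := by
      intro h0
      apply hv
      rw [← e3, h0, Matrix.mulVec_zero]
    have e6 : Np *ᵥ v ≠ 0 := by
      intro h0
      apply e1
      rw [← e4, h0, Matrix.mulVec_zero]
    have e7 : Real.sqrt ((Q *ᵥ v) ⬝ᵥ (Q *ᵥ v)) ≤ Real.sqrt (v ⬝ᵥ v) := by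
      have hww : (Q *ᵥ v) ⬝ᵥ (Q *ᵥ v) = v ⬝ᵥ (Q *ᵥ v) := by
        rw [← dot_shift hQsym Q v v, hQQ]
      have h1 : (Q *ᵥ v) ⬝ᵥ (Q *ᵥ v) ≤
          Real.sqrt (v ⬝ᵥ v) * Real.sqrt ((Q *ᵥ v) ⬝ᵥ (Q *ᵥ v)) := by
        conv_lhs => rw [hww]
        exact dot_cs v (Q *ᵥ v)
      by_cases ha : Real.sqrt ((Q *ᵥ v) ⬝ᵥ (Q *ᵥ v)) = 0
      · rw [ha]; exact Real.sqrt_nonneg _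
      · have ha' : 0 < Real.sqrt ((Q *ᵥ v) ⬝ᵥ (Q *ᵥ v)) :=
          lt_of_le_of_ne (Real.sqrt_nonneg _) (Ne.symm ha)
        have h2 : Real.sqrt ((Q *ᵥ v) ⬝ᵥ (Q *ᵥ v)) * Real.sqrt ((Q *ᵥ v) ⬝ᵥ (Q *ᵥ v))
            = (Q *ᵥ v) ⬝ᵥ (Q *ᵥ v) := Real.mul_self_sqrt (dot_self_nonneg _)
        nlinarith
    exact ⟨B *ᵥ v, Q *ᵥ v, rfl, hv, e1, e3, e4, e5, e2, e6, e7⟩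
  -- lower bound 1
  have low1 : c ≤ sSup T1 := by
    apply sNorm_le_bound B _ hsup1nn
    intro v
    by_cases hv : B *ᵥ v = 0
    · rw [hv]
      have : (0 : Fin n → ℝ) ⬝ᵥ (0 : Fin n → ℝ) = 0 := zero_dotProduct 0
      rw [this, Real.sqrt_zero]
      positivity
    · obtain ⟨u, w, huv, hune, hwne, hSx, hS'y, hBw, hxne, hyne, hwv⟩ := key v hv
      have hupos : 0 < u ⬝ᵥ u :=
        lt_of_le_of_ne (dot_self_nonneg u)
          (fun h => hune (dotProduct_self_eq_zero.mp h.symm))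
      have hwpos : 0 < w ⬝ᵥ w :=
        lt_of_le_of_ne (dot_self_nonneg w)
          (fun h => hwne (dotProduct_self_eq_zero.mp h.symm))
      have hsu : 0 < Real.sqrt (u ⬝ᵥ u) := Real.sqrt_pos.mpr hupos
      have hsw : 0 < Real.sqrt (w ⬝ᵥ w) := Real.sqrt_pos.mpr hwpos
      have hmem : Real.sqrt (u ⬝ᵥ u) / Real.sqrt (w ⬝ᵥ w) ∈ T1 := by
        refine ⟨Mp *ᵥ u, Np *ᵥ v, hxne, hyne, ?_⟩
        rw [hnum, hdenM, hdenN, hSx, hS'y, hBw,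
          Real.sqrt_mul (dot_self_nonneg u)]
        rw [div_eq_div_iff (ne_of_gt hsw) (by positivity)]
        have h2 : Real.sqrt (u ⬝ᵥ u) * Real.sqrt (u ⬝ᵥ u) = u ⬝ᵥ u :=
          Real.mul_self_sqrt (dot_self_nonneg u)
        linear_combination Real.sqrt (w ⬝ᵥ w) * h2
      have hle := le_csSup hbdd1 hmem
      rw [← huv]
      calc Real.sqrt (u ⬝ᵥ u)
          = (Real.sqrt (u ⬝ᵥ u) / Real.sqrt (w ⬝ᵥ w)) * Real.sqrt (w ⬝ᵥ w) := by
            field_simp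
      _ ≤ sSup T1 * Real.sqrt (v ⬝ᵥ v) := mul_le_mul hle hwv (le_of_lt hsw) hsup1nn
  -- lower bound 2
  have low2 : c ≤ 2 * sSup T2 := by
    apply sNorm_le_bound B _ (by linarith)
    intro v
    by_cases hv : B *ᵥ v = 0
    · rw [hv]
      have : (0 : Fin n → ℝ) ⬝ᵥ (0 : Fin n → ℝ) = 0 := zero_dotProduct 0
      rw [this, Real.sqrt_zero]
      positivity
    · obtain ⟨u, w, huv, hune, hwne, hSx, hS'y, hBw, hxne, hyne, hwv⟩ := key v hv
      have hupos : 0 < u ⬝ᵥ u :=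
        lt_of_le_of_ne (dot_self_nonneg u)
          (fun h => hune (dotProduct_self_eq_zero.mp h.symm))
      have hwpos : 0 < w ⬝ᵥ w :=
        lt_of_le_of_ne (dot_self_nonneg w)
          (fun h => hwne (dotProduct_self_eq_zero.mp h.symm))
      have hsu : 0 < Real.sqrt (u ⬝ᵥ u) := Real.sqrt_pos.mpr hupos
      have hsw : 0 < Real.sqrt (w ⬝ᵥ w) := Real.sqrt_pos.mpr hwpos
      set t : ℝ := Real.sqrt (w ⬝ᵥ w) / Real.sqrt (u ⬝ᵥ u) with htdef
      have htpos : 0 < t := by positivity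
      have hmem : Real.sqrt (u ⬝ᵥ u) / (2 * Real.sqrt (w ⬝ᵥ w)) ∈ T2 := by
        refine ⟨t • (Mp *ᵥ u), Np *ᵥ v, smul_ne_zero (ne_of_gt htpos) hxne, hyne, ?_⟩
        rw [hnum, hdenM, hdenN, hS'y]
        have hSx' : S *ᵥ (t • (Mp *ᵥ u)) = t • u := by rw [Matrix.mulVec_smul, hSx]
        rw [hSx', hBw, smul_dotProduct, smul_dotProduct,
          dotProduct_smul]
        have h2 : Real.sqrt (u ⬝ᵥ u) * Real.sqrt (u ⬝ᵥ u) = u ⬝ᵥ u :=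
          Real.mul_self_sqrt (dot_self_nonneg u)
        have h3 : Real.sqrt (w ⬝ᵥ w) * Real.sqrt (w ⬝ᵥ w) = w ⬝ᵥ w :=
          Real.mul_self_sqrt (dot_self_nonneg w)
        rw [htdef, ← h2, ← h3]
        field_simp
        ring_nf
        rw [Real.sq_sqrt (dot_self_nonneg u), Real.sq_sqrt (dot_self_nonneg w)]
        have hs : √(u ⬝ᵥ u) ≠ 0 := ne_of_gt hsu
        have hi : √(u ⬝ᵥ u) * (√(u ⬝ᵥ u))⁻¹ = 1 := mul_inv_cancel₀ hs
        have hw2 : √(w ⬝ᵥ w) ^ 2 = w ⬝ᵥ w := Real.sq_sqrt (dot_self_nonneg w)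
        rw [hw2]
        linear_combination (w ⬝ᵥ w * √(u ⬝ᵥ u) * (√(u ⬝ᵥ u) * (√(u ⬝ᵥ u))⁻¹ - 1)) * hi
          - (w ⬝ᵥ w * (√(u ⬝ᵥ u) * (√(u ⬝ᵥ u))⁻¹ ^ 2 - 2 * (√(u ⬝ᵥ u))⁻¹)) * h2
      have hle := le_csSup hbdd2 hmem
      have e1 : Real.sqrt (u ⬝ᵥ u) ≤ sSup T2 * (2 * Real.sqrt (w ⬝ᵥ w)) :=
        (div_le_iff₀ (by positivity)).mp hle
      rw [← huv]
      calc Real.sqrt (u ⬝ᵥ u) ≤ sSup T2 * (2 * Real.sqrt (w ⬝ᵥ w)) := e1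
      _ ≤ sSup T2 * (2 * Real.sqrt (v ⬝ᵥ v)) := by
          apply mul_le_mul_of_nonneg_left (by linarith) hsup2nn
      _ = 2 * sSup T2 * Real.sqrt (v ⬝ᵥ v) := by ring
  constructor
  · exact le_antisymm low1 (csSup_le hT1ne ub1)
  · have h1 := csSup_le hT2ne ub2
    have h2 : 2 * sSup T2 ≤ c := by linarith
    exact le_antisymm low2 h2
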